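/- arXiv:0707.2811 — 8 statements merged into one kernel-verified Lean document; each statement's English description precedes it below -/
import Mathlib

section
/- For r ≥ 0 let N(r) = (e^{2r} − 1)/2 be the negativity of a pure two-mode squeezed state with squeezing parameter r, and let Q(r) = (2/π)·arctan(sinh(2r)) be its bit quadrature correlation. Then sinh(2r) = 2·N(r)·(N(r)+1)/(2·N(r)+1), so that Q(r) = (2/π)·arctan(2N(N+1)/(2N+1)) with N = N(r); moreover the function N ↦ (2/π)·arctan(2N(N+1)/(2N+1)) is strictly increasing on [0, ∞). Hence on pure two-mode squeezed states the bit quadrature correlation is a strictly monotonic function of the negativity. -/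
open Real

/-- On pure two-mode squeezed states, the bit quadrature correlation
`Q(r) = (2/π)·arctan(sinh(2r))` is a strictly monotonic function of the
negativity `N(r) = (e^{2r} − 1)/2`: one has
`sinh(2r) = 2N(N+1)/(2N+1)` with `N = N(r)`, hence
`Q(r) = (2/π)·arctan(2N(N+1)/(2N+1))`, and
`N ↦ (2/π)·arctan(2N(N+1)/(2N+1))` is strictly increasing on `[0, ∞)`. -/
theorem pure_squeezed_Q_monotone_in_negativity :
    (∀ r : ℝ, 0 ≤ r →
      Real.sinh (2 * r) =
        2 * ((Real.exp (2 * r) - 1) / 2) * ((Real.exp (2 * r) - 1) / 2 + 1) /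
          (2 * ((Real.exp (2 * r) - 1) / 2) + 1)) ∧
    (∀ r : ℝ, 0 ≤ r →
      (2 / π) * Real.arctan (Real.sinh (2 * r)) =
        (2 / π) * Real.arctan
          (2 * ((Real.exp (2 * r) - 1) / 2) * ((Real.exp (2 * r) - 1) / 2 + 1) /
            (2 * ((Real.exp (2 * r) - 1) / 2) + 1))) ∧
    StrictMonoOn
      (fun N : ℝ => (2 / π) * Real.arctan (2 * N * (N + 1) / (2 * N + 1)))
      (Set.Ici 0) := by
  have key : ∀ r : ℝ, 0 ≤ r →
      Real.sinh (2 * r) =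
        2 * ((Real.exp (2 * r) - 1) / 2) * ((Real.exp (2 * r) - 1) / 2 + 1) /
          (2 * ((Real.exp (2 * r) - 1) / 2) + 1) := by
    intro r _
    have h : Real.sinh (2 * r) = (Real.exp (2 * r) - Real.exp (-(2 * r))) / 2 :=
      Real.sinh_eq _
    have he : Real.exp (-(2 * r)) = (Real.exp (2 * r))⁻¹ := Real.exp_neg _
    have hp : Real.exp (2 * r) ≠ 0 := (Real.exp_pos _).ne'
    rw [h, he]
    have hden : 2 * ((Real.exp (2 * r) - 1) / 2) + 1 = Real.exp (2 * r) := by ring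
    rw [hden]
    field_simp
    ring
  refine ⟨key, fun r hr => by rw [key r hr], ?_⟩
  intro a ha b hb hab
  simp only [Set.mem_Ici] at ha hb
  have hpi : (0:ℝ) < 2 / π := by positivity
  apply mul_lt_mul_of_pos_left _ hpi
  apply Real.arctan_strictMono
  have hda : (0:ℝ) < 2 * a + 1 := by linarith
  have hdb : (0:ℝ) < 2 * b + 1 := by linarith
  rw [div_lt_div_iff₀ hda hdb]
  nlinarith [sq_nonneg (b - a), mul_pos (sub_pos.mpr hab) (add_pos_of_nonneg_of_pos ha one_pos)]
end

section
/- Let φ0(x) = π^{-1/4}·exp(−x²/2) and φ1(x) = √2·π^{-1/4}·x·exp(−x²/2) be the first two normalized Hermite functions, let 0 ≤ p ≤ 1, and define the two-variable wavefunction ψ(x,y) = √p·φ0(x)·φ0(y) + √(1−p)·φ1(x)·φ1(y) of the photonic Bell state Φ⁺ = √p|00⟩ + √(1−p)|11⟩. Then the sign-binned quadrature correlation of its position distribution equals ∫∫_{ℝ²} sgn(x·y)·ψ(x,y)² dx dy = (4/π)·√(p(1−p)); that is, the bit quadrature correlation equals 4/π times the negativity N_B = √(p(1−p)) of the Bell state.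 -/
/-!
Because sgn(xy) = sgn x · sgn y, the sign-binned correlation of a kernel f(x) g(y) factorises
as (∫ sgn · f) (∫ sgn · g). Squaring the Schmidt form ψ = √p φ₀ ⊗ φ₀ + √(1-p) φ₁ ⊗ φ₁ gives
the kernels φ₀² ⊗ φ₀², φ₁² ⊗ φ₁² and, twice, (φ₀φ₁) ⊗ (φ₀φ₁). The first two contribute nothing,
since φ₀² and φ₁² are even, while ∫ sgn(x) φ₀(x) φ₁(x) dx = √(2/π) ∫ |x| e^{-x²} dx = √(2/π).
Hence the correlation is 2 √p √(1-p) · 2/π.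
-/

open MeasureTheory Real

namespace Real

theorem monotone_sign : Monotone Real.sign := by
  intro a b hab
  rcases lt_trichotomy a 0 with ha | rfl | ha <;> rcases lt_trichotomy b 0 with hb | rfl | hb <;>
    simp [sign_of_neg, sign_of_pos, *] <;> linarith

theorem measurable_sign : Measurable Real.sign := monotone_sign.measurable

theorem abs_sign_le_one (r : ℝ) : |Real.sign r| ≤ 1 := by
  rcases sign_apply_eq r with h | h | h <;> simp [h]

theorem sign_eq_coe_sign (r : ℝ) : Real.sign r = SignType.sign r := by
  rcases lt_trichotomy r 0 with h | rfl | h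
  · simp [sign_of_neg h, h]
  · simp
  · simp [sign_of_pos h, h]

theorem sign_mul (x y : ℝ) : Real.sign (x * y) = Real.sign x * Real.sign y := by
  simp only [sign_eq_coe_sign, _root_.sign_mul, SignType.coe_mul]

theorem sign_mul_self (x : ℝ) : Real.sign x * x = |x| := by
  rw [sign_eq_coe_sign, _root_.sign_mul_self]

end Real

theorem MeasureTheory.Integrable.sign_mul {μ : Measure ℝ} {f : ℝ → ℝ} (hf : Integrable f μ) :
    Integrable (fun x => Real.sign x * f x) μ :=
  hf.bdd_mul measurable_sign.aestronglyMeasurable (.of_forall abs_sign_le_one)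

theorem integral_sign_mul_eq_zero_of_even {f : ℝ → ℝ} (hf : ∀ x, f (-x) = f x) :
    ∫ x, Real.sign x * f x = 0 := by
  have h := integral_neg_eq_self (fun x => Real.sign x * f x) volume
  simp only [sign_neg, hf, neg_mul, integral_neg] at h
  linarith

theorem integrable_pow_mul_exp_neg_sq (n : ℕ) : Integrable fun x : ℝ => x ^ n * exp (-x ^ 2) := by
  simpa [Real.rpow_natCast] using
    integrable_rpow_mul_exp_neg_mul_sq one_pos (neg_one_lt_zero.trans_le n.cast_nonneg)

theorem integral_abs_mul_exp_neg_sq : ∫ x : ℝ, |x| * exp (-x ^ 2) = 1 := by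
  have h := integral_rpow_mul_exp_neg_rpow (p := 2) (q := 1) two_pos (by norm_num)
  norm_num [Real.rpow_natCast] at h
  have h_abs := integral_comp_abs (f := fun x : ℝ => x * exp (-x ^ 2))
  simp only [sq_abs] at h_abs
  rw [h_abs, h]
  norm_num

noncomputable def signBinnedCorrelation (W : ℝ → ℝ → ℝ) : ℝ :=
  ∫ q : ℝ × ℝ, Real.sign (q.1 * q.2) * W q.1 q.2

theorem signBinnedCorrelation_sum_mul {ι : Type*} (s : Finset ι) (a : ι → ℝ)
    {f g : ι → ℝ → ℝ} (hf : ∀ i ∈ s, Integrable (f i)) (hg : ∀ i ∈ s, Integrable (g i)) :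
    signBinnedCorrelation (fun x y => ∑ i ∈ s, a i * (f i x * g i y)) =
      ∑ i ∈ s, a i * ((∫ x, Real.sign x * f i x) * ∫ y, Real.sign y * g i y) := by
  have h_split : ∀ q : ℝ × ℝ, Real.sign (q.1 * q.2) * ∑ i ∈ s, a i * (f i q.1 * g i q.2) =
      ∑ i ∈ s, a i * ((Real.sign q.1 * f i q.1) * (Real.sign q.2 * g i q.2)) := by
    intro q
    rw [Real.sign_mul, Finset.mul_sum]
    exact Finset.sum_congr rfl fun i _ => by ring
  simp only [signBinnedCorrelation, h_split, Measure.volume_eq_prod]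
  rw [integral_finsetSum s fun i hi =>
    (((hf i hi).sign_mul.mul_prod (hg i hi).sign_mul).const_mul (a i))]
  refine Finset.sum_congr rfl fun i _ => ?_
  rw [integral_const_mul, ← integral_prod_mul (fun x => Real.sign x * f i x)]

theorem signBinnedCorrelation_sq_sum {ι : Type*} [Fintype ι] (c : ι → ℝ) (u : ι → ℝ → ℝ)
    (hu : ∀ i j, Integrable fun x => u i x * u j x) :
    signBinnedCorrelation (fun x y => (∑ i, c i * u i x * u i y) ^ 2) =
      ∑ i, ∑ j, c i * c j * (∫ x, Real.sign x * (u i x * u j x)) ^ 2 := by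
  have h_expand : ∀ x y, (∑ i, c i * u i x * u i y) ^ 2 =
      ∑ ij : ι × ι, c ij.1 * c ij.2 * ((u ij.1 x * u ij.2 x) * (u ij.1 y * u ij.2 y)) := by
    intro x y
    rw [sq, Finset.sum_mul_sum, Fintype.sum_prod_type]
    exact Finset.sum_congr rfl fun i _ => Finset.sum_congr rfl fun j _ => by ring
  simp only [h_expand]
  rw [signBinnedCorrelation_sum_mul _ _ (fun ij _ => hu ij.1 ij.2) (fun ij _ => hu ij.1 ij.2),
    Fintype.sum_prod_type]
  simp only [sq]

noncomputable def hermiteFunction₀ (x : ℝ) : ℝ := π ^ (-(1 : ℝ) / 4) * exp (-x ^ 2 / 2)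

noncomputable def hermiteFunction₁ (x : ℝ) : ℝ := √2 * π ^ (-(1 : ℝ) / 4) * x * exp (-x ^ 2 / 2)

theorem pi_rpow_neg_one_div_four_sq : (π ^ (-(1 : ℝ) / 4)) ^ 2 = (√π)⁻¹ := by
  rw [← rpow_natCast, ← rpow_mul pi_pos.le, sqrt_eq_rpow, ← rpow_neg pi_pos.le]
  norm_num

theorem exp_neg_sq_div_two_mul_self (x : ℝ) :
    exp (-x ^ 2 / 2) * exp (-x ^ 2 / 2) = exp (-x ^ 2) := by
  rw [← exp_add, add_halves]

theorem hermiteFunction₀_neg (x : ℝ) : hermiteFunction₀ (-x) = hermiteFunction₀ x := by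
  simp [hermiteFunction₀]

theorem hermiteFunction₁_neg (x : ℝ) : hermiteFunction₁ (-x) = -hermiteFunction₁ x := by
  simp [hermiteFunction₁]

theorem hermiteFunction₀_mul_self (x : ℝ) :
    hermiteFunction₀ x * hermiteFunction₀ x = (√π)⁻¹ * exp (-x ^ 2) := by
  rw [← pi_rpow_neg_one_div_four_sq, ← exp_neg_sq_div_two_mul_self, hermiteFunction₀]
  ring

theorem hermiteFunction₁_mul_self (x : ℝ) :
    hermiteFunction₁ x * hermiteFunction₁ x = 2 * (√π)⁻¹ * (x ^ 2 * exp (-x ^ 2)) := by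
  calc hermiteFunction₁ x * hermiteFunction₁ x
      = √2 ^ 2 * (π ^ (-(1 : ℝ) / 4)) ^ 2 * (x ^ 2 * (exp (-x ^ 2 / 2) * exp (-x ^ 2 / 2))) := by
        rw [hermiteFunction₁]; ring
    _ = 2 * (√π)⁻¹ * (x ^ 2 * exp (-x ^ 2)) := by
        rw [sq_sqrt zero_le_two, pi_rpow_neg_one_div_four_sq, exp_neg_sq_div_two_mul_self]

theorem hermiteFunction₀_mul_hermiteFunction₁ (x : ℝ) :
    hermiteFunction₀ x * hermiteFunction₁ x = √2 * (√π)⁻¹ * (x * exp (-x ^ 2)) := by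
  rw [← pi_rpow_neg_one_div_four_sq, ← exp_neg_sq_div_two_mul_self, hermiteFunction₀,
    hermiteFunction₁]
  ring

theorem integrable_hermiteFunction_mul (i j : Fin 2) :
    Integrable fun x => ![hermiteFunction₀, hermiteFunction₁] i x *
      ![hermiteFunction₀, hermiteFunction₁] j x := by
  have h₀₀ : Integrable fun x => hermiteFunction₀ x * hermiteFunction₀ x := by
    simpa [hermiteFunction₀_mul_self] using (integrable_pow_mul_exp_neg_sq 0).const_mul (√π)⁻¹
  have h₁₁ : Integrable fun x => hermiteFunction₁ x * hermiteFunction₁ x := by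
    simpa [hermiteFunction₁_mul_self] using
      (integrable_pow_mul_exp_neg_sq 2).const_mul (2 * (√π)⁻¹)
  have h₀₁ : Integrable fun x => hermiteFunction₀ x * hermiteFunction₁ x := by
    simpa [hermiteFunction₀_mul_hermiteFunction₁] using
      (integrable_pow_mul_exp_neg_sq 1).const_mul (√2 * (√π)⁻¹)
  fin_cases i <;> fin_cases j
  · exact h₀₀
  · exact h₀₁
  · exact h₀₁.congr (.of_forall fun x => mul_comm _ _)
  · exact h₁₁

theorem integral_sign_mul_hermiteFunction₀_mul_self :
    ∫ x, Real.sign x * (hermiteFunction₀ x * hermiteFunction₀ x) = 0 :=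
  integral_sign_mul_eq_zero_of_even fun x => by rw [hermiteFunction₀_neg]

theorem integral_sign_mul_hermiteFunction₁_mul_self :
    ∫ x, Real.sign x * (hermiteFunction₁ x * hermiteFunction₁ x) = 0 :=
  integral_sign_mul_eq_zero_of_even fun x => by rw [hermiteFunction₁_neg, neg_mul_neg]

theorem integral_sign_mul_hermiteFunction₀_mul_hermiteFunction₁ :
    ∫ x, Real.sign x * (hermiteFunction₀ x * hermiteFunction₁ x) = √2 / √π := by
  have h : ∀ x, Real.sign x * (hermiteFunction₀ x * hermiteFunction₁ x) =
      √2 * (√π)⁻¹ * (|x| * exp (-x ^ 2)) := fun x => by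
    rw [hermiteFunction₀_mul_hermiteFunction₁, ← Real.sign_mul_self]
    ring
  rw [integral_congr_ae (.of_forall h), integral_const_mul, integral_abs_mul_exp_neg_sq,
    mul_one, div_eq_mul_inv]

theorem bell_state_phi_bit_correlation_general (p : ℝ) (hp0 : 0 ≤ p)
    (phi0 phi1 : ℝ → ℝ)
    (hphi0 : ∀ x : ℝ, phi0 x = π ^ (-(1 : ℝ) / 4) * Real.exp (-x ^ 2 / 2))
    (hphi1 : ∀ x : ℝ, phi1 x =
      Real.sqrt 2 * π ^ (-(1 : ℝ) / 4) * x * Real.exp (-x ^ 2 / 2))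
    (psi : ℝ → ℝ → ℝ)
    (hpsi : ∀ x y : ℝ, psi x y =
      Real.sqrt p * phi0 x * phi0 y + Real.sqrt (1 - p) * phi1 x * phi1 y) :
    ∫ q : ℝ × ℝ, Real.sign (q.1 * q.2) * (psi q.1 q.2) ^ 2
      = (4 / π) * Real.sqrt (p * (1 - p)) := by
  obtain rfl : phi0 = hermiteFunction₀ := funext hphi0
  obtain rfl : phi1 = hermiteFunction₁ := funext hphi1
  have h_schmidt : (fun x y => psi x y ^ 2) = fun x y =>
      (∑ i, ![√p, √(1 - p)] i * ![hermiteFunction₀, hermiteFunction₁] i x *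
        ![hermiteFunction₀, hermiteFunction₁] i y) ^ 2 := by
    funext x y
    simp [hpsi, Fin.sum_univ_two]
  change signBinnedCorrelation (fun x y => psi x y ^ 2) = _
  rw [h_schmidt, signBinnedCorrelation_sq_sum _ _ integrable_hermiteFunction_mul]
  simp only [Fin.sum_univ_two, Matrix.cons_val_zero, Matrix.cons_val_one,
    mul_comm (hermiteFunction₁ _) (hermiteFunction₀ _),
    integral_sign_mul_hermiteFunction₀_mul_self, integral_sign_mul_hermiteFunction₁_mul_self,
    integral_sign_mul_hermiteFunction₀_mul_hermiteFunction₁]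
  rw [div_pow, sq_sqrt zero_le_two, sq_sqrt pi_pos.le, sqrt_mul hp0]
  ring

/-- **Bit quadrature correlations of the photonic Bell state
`Φ⁺ = √p|00⟩ + √(1−p)|11⟩`.** With `φ0, φ1` the first two normalized
Hermite functions and `ψ(x,y) = √p·φ0(x)φ0(y) + √(1−p)·φ1(x)φ1(y)`, the
sign-binned quadrature correlation of the position distribution `ψ²`
equals `(4/π)·√(p(1−p))`, i.e. `4/π` times the negativity. -/
theorem bell_state_phi_bit_correlation (p : ℝ) (hp0 : 0 ≤ p) (hp1 : p ≤ 1)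
    (phi0 phi1 : ℝ → ℝ)
    (hphi0 : ∀ x : ℝ, phi0 x = π ^ (-(1 : ℝ) / 4) * Real.exp (-x ^ 2 / 2))
    (hphi1 : ∀ x : ℝ, phi1 x =
      Real.sqrt 2 * π ^ (-(1 : ℝ) / 4) * x * Real.exp (-x ^ 2 / 2))
    (psi : ℝ → ℝ → ℝ)
    (hpsi : ∀ x y : ℝ, psi x y =
      Real.sqrt p * phi0 x * phi0 y + Real.sqrt (1 - p) * phi1 x * phi1 y) :
    ∫ q : ℝ × ℝ, Real.sign (q.1 * q.2) * (psi q.1 q.2) ^ 2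
      = (4 / π) * Real.sqrt (p * (1 - p)) :=
  bell_state_phi_bit_correlation_general p hp0 phi0 phi1 hphi0 hphi1 psi hpsi
end

section
/- For fixed Λ ∈ (0, 1), the negativity of the photon-subtracted state, N_T(Λ) = 2/(1 − T·Λ) − 1/(1 + T²·Λ²) − 1, is strictly increasing as a function of the transmittivity T on (0, 1]. -/
open Real

/-- For fixed `Λ ∈ (0,1)`, the negativity of the photon-subtracted state,
`N_T(Λ) = 2/(1 − T·Λ) − 1/(1 + T²·Λ²) − 1`, is strictly increasing as a
function of the transmittivity `T` on `(0,1]`. -/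
theorem photon_subtracted_negativity_mono_in_transmittivity
    (L : ℝ) (hL0 : 0 < L) (hL1 : L < 1) :
    StrictMonoOn
      (fun T : ℝ => 2 / (1 - T * L) - 1 / (1 + T ^ 2 * L ^ 2) - 1)
      (Set.Ioc 0 1) := by
  intro a ha b hb hab
  simp only
  have haL : a * L < 1 := by nlinarith [ha.1, ha.2, hb.1, hb.2]
  have hbL : b * L < 1 := by nlinarith [ha.1, ha.2, hb.1, hb.2]
  have h1 : 2 / (1 - a * L) < 2 / (1 - b * L) := by
    apply div_lt_div_of_pos_left (by norm_num) (by linarith)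
    nlinarith [ha.1]
  have h2 : 1 / (1 + b ^ 2 * L ^ 2) < 1 / (1 + a ^ 2 * L ^ 2) := by
    apply div_lt_div_of_pos_left (by norm_num) (by nlinarith [sq_nonneg (a*L)])
    have hsq : a ^ 2 < b ^ 2 := by nlinarith [ha.1]
    nlinarith [mul_lt_mul_of_pos_right hsq (pow_pos hL0 2)]
  linarith
end

section
/- For every r > 0, the ideal two-photon-subtracted state (transmittivity T = 1) is strictly more entangled than the original two-mode squeezed state: with Λ = tanh(r), one has 2/(1 − Λ) − 1/(1 + Λ²) − 1 > (e^{2r} − 1)/2, where the left side is the negativity of the photon-subtracted state with T = 1 and the right side is the negativity of the two-mode squeezed state with squeezing r. -/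
open Real

/-- For every `r > 0`, the ideal two-photon-subtracted state (`T = 1`) is
strictly more entangled than the original two-mode squeezed state: with
`Λ = tanh r`, `2/(1 − Λ) − 1/(1 + Λ²) − 1 > (e^{2r} − 1)/2`. -/
theorem ideal_photon_subtracted_beats_squeezed (r : ℝ) (hr : 0 < r) :
    (Real.exp (2 * r) - 1) / 2 <
      2 / (1 - Real.tanh r) - 1 / (1 + Real.tanh r ^ 2) - 1 := by
  have hx : 1 < Real.exp r := by simpa using Real.exp_lt_exp.mpr hr
  have hx0 : (0:ℝ) < Real.exp r := by linarith
  have ht : Real.tanh r =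
      (Real.exp r - (Real.exp r)⁻¹) / (Real.exp r + (Real.exp r)⁻¹) := by
    have h0 : Real.exp r ≠ 0 := Real.exp_ne_zero r
    have h1 : Real.exp r + (Real.exp r)⁻¹ ≠ 0 := by positivity
    rw [Real.tanh_eq_sinh_div_cosh, Real.sinh_eq, Real.cosh_eq, Real.exp_neg]
    field_simp
  have h2 : Real.exp (2 * r) = Real.exp r * Real.exp r := by
    rw [two_mul, Real.exp_add]
  set x := Real.exp r with hxdef
  rw [ht, h2]
  have hxi : 0 < x⁻¹ := inv_pos.mpr hx0
  have hsum : 0 < x + x⁻¹ := by linarith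
  have hxx : x * x⁻¹ = 1 := mul_inv_cancel₀ (ne_of_gt hx0)
  have hnum : x - x⁻¹ < x + x⁻¹ := by linarith
  have hden1 : 0 < 1 - (x - x⁻¹) / (x + x⁻¹) := by
    rw [sub_pos, div_lt_one hsum]; exact hnum
  have hden2 : (0:ℝ) < 1 + ((x - x⁻¹) / (x + x⁻¹)) ^ 2 := by positivity
  rw [div_lt_iff₀ (by norm_num : (0:ℝ) < 2)]
  have key : 2 / (1 - (x - x⁻¹) / (x + x⁻¹)) = x * x + 1 := by
    field_simp
    nlinarith [hxx]
  rw [key]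
  have h3 : 1 / (1 + ((x - x⁻¹) / (x + x⁻¹)) ^ 2) ≤ 1 := by
    rw [div_le_one hden2]; nlinarith [sq_nonneg ((x - x⁻¹) / (x + x⁻¹))]
  nlinarith [h3, hx]
end

section
/- For every T ∈ (0, 1), the negativity of the photon-subtracted state saturates: N_T(tanh r) = 2/(1 − T·tanh r) − 1/(1 + T²·tanh²r) − 1 is bounded above (by 2/(1 − T) − 1/(1 + T²) − 1) for all r ≥ 0, and consequently there exists a squeezing threshold r_T such that for all r > r_T the two-mode squeezed state is more entangled than the photon-subtracted one: (e^{2r} − 1)/2 > N_T(tanh r). -/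
open Real

/-- For every `T ∈ (0,1)`, the negativity of the photon-subtracted state
saturates: `N_T(tanh r)` is bounded above by `2/(1 − T) − 1/(1 + T²) − 1`
for all `r ≥ 0`, and consequently there is a squeezing threshold `r_T`
beyond which the two-mode squeezed state is more entangled:
`(e^{2r} − 1)/2 > N_T(tanh r)` for all `r > r_T`. -/
theorem photon_subtracted_negativity_saturates
    (T : ℝ) (hT0 : 0 < T) (hT1 : T < 1) :
    (∀ r : ℝ, 0 ≤ r →
      2 / (1 - T * Real.tanh r) - 1 / (1 + T ^ 2 * Real.tanh r ^ 2) - 1 ≤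
        2 / (1 - T) - 1 / (1 + T ^ 2) - 1) ∧
    ∃ rT : ℝ, ∀ r : ℝ, rT < r →
      2 / (1 - T * Real.tanh r) - 1 / (1 + T ^ 2 * Real.tanh r ^ 2) - 1 <
        (Real.exp (2 * r) - 1) / 2 := by
  have key : ∀ r : ℝ, 0 ≤ r →
      2 / (1 - T * Real.tanh r) - 1 / (1 + T ^ 2 * Real.tanh r ^ 2) - 1 ≤
        2 / (1 - T) - 1 / (1 + T ^ 2) - 1 := by
    intro r hr
    have ht0 : 0 ≤ Real.tanh r := by
      rw [Real.tanh_eq_sinh_div_cosh]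
      exact div_nonneg (by simpa using Real.sinh_le_sinh.mpr hr) (Real.cosh_pos r).le
    have ht1 : Real.tanh r < 1 := by
      rw [Real.tanh_eq_sinh_div_cosh]
      exact (div_lt_one (Real.cosh_pos r)).mpr (Real.sinh_lt_cosh r)
    have h1 : 2 / (1 - T * Real.tanh r) ≤ 2 / (1 - T) := by
      apply div_le_div_of_nonneg_left (by norm_num) (by linarith)
      nlinarith
    have h2 : 1 / (1 + T ^ 2) ≤ 1 / (1 + T ^ 2 * Real.tanh r ^ 2) := by
      apply one_div_le_one_div_of_le (by positivity)
      have hsq : Real.tanh r ^ 2 ≤ 1 := by nlinarith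
      nlinarith [sq_nonneg T]
    linarith
  refine ⟨key, max 0 (2 / (1 - T)), fun r hr => ?_⟩
  have hr0 : 0 ≤ r := le_of_lt (lt_of_le_of_lt (le_max_left _ _) hr)
  have hC := key r hr0
  have hexp : 2 * r + 1 ≤ Real.exp (2 * r) := Real.add_one_le_exp _
  have hr2 : 2 / (1 - T) < r := lt_of_le_of_lt (le_max_right _ _) hr
  have hpos : 0 < 1 / (1 + T ^ 2) := by positivity
  linarith
end

section
/- For every fixed p ∈ (0, 1], the function g_p(N) = (2p/π)·arctan(N·(1/(2N + p) + 1/p)) is strictly increasing in N on [0, ∞). Hence the bit quadrature correlation Q(ρ_m) = g_p(N_m) of the mixture ρ_m = p|φ_r⟩⟨φ_r| + (1−p)|00⟩⟨00| is a strictly monotonic function of its negativity N_m = p·(e^{2r} − 1)/2 for any fixed p. -/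
open Real

/-- For every fixed `p ∈ (0,1]`, the function
`g_p(N) = (2p/π)·arctan(N·(1/(2N + p) + 1/p))` is strictly increasing on
`[0, ∞)`. Hence the bit quadrature correlation `Q(ρ_m) = g_p(N_m)` of the
mixture `ρ_m = p|φ_r⟩⟨φ_r| + (1−p)|00⟩⟨00|` is a strictly monotonic
function of its negativity `N_m = p·(e^{2r} − 1)/2`. -/
theorem mixture_Q_monotone_in_negativity (p : ℝ) (hp0 : 0 < p) (hp1 : p ≤ 1) :
    StrictMonoOn
      (fun N : ℝ => (2 * p / π) * Real.arctan (N * (1 / (2 * N + p) + 1 / p)))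
      (Set.Ici 0) := by
  intro a ha b hb hab
  simp only [Set.mem_Ici] at ha hb
  have hc : 0 < 2 * p / π := by positivity
  apply mul_lt_mul_of_pos_left _ hc
  apply Real.arctan_strictMono
  have h1 : 0 < 2 * a + p := by linarith
  have h2 : 0 < 2 * b + p := by linarith
  rw [div_add_div _ _ h1.ne' hp0.ne', div_add_div _ _ h2.ne' hp0.ne']
  rw [mul_div_assoc', mul_div_assoc', div_lt_div_iff₀ (by positivity) (by positivity)]
  nlinarith [mul_pos h1 h2, mul_pos hp0 hp0, sq_nonneg (a - b), mul_pos (mul_pos hp0 hp0) (sub_pos.mpr hab)]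
end

section
/- Let φ0(x) = π^{-1/4}·exp(−x²/2) and φ2(x) = 2^{-1/2}·π^{-1/4}·(2x² − 1)·exp(−x²/2) be the normalized Hermite functions of orders 0 and 2, and define ψ_h(x,y) = (1/√2)·φ0(x)·φ0(y) + (1/2)·(φ0(x)·φ2(y) + φ2(x)·φ0(y)), the wavefunction of the photonic qutrit state |ψ_h⟩ = |00⟩/√2 + (|02⟩ + |20⟩)/2. Then the sign-binned quadrature correlation of its position distribution vanishes: ∫∫_{ℝ²} sgn(x·y)·ψ_h(x,y)² dx dy = 0. -/
open MeasureTheory Real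

private lemma neg_fst_integral (g : ℝ × ℝ → ℝ) :
    ∫ q : ℝ × ℝ, g (-q.1, q.2) = ∫ q, g q := by
  let e : ℝ × ℝ ≃ᵐ ℝ × ℝ :=
    (Homeomorph.neg ℝ).toMeasurableEquiv.prodCongr (MeasurableEquiv.refl ℝ)
  have hcoe : ⇑e = fun q : ℝ × ℝ => (-q.1, q.2) := rfl
  have hmp : MeasurePreserving e (volume.prod volume) (volume.prod volume) := by
    rw [hcoe]
    exact (Measure.measurePreserving_neg (volume : Measure ℝ)).prod
      (MeasurePreserving.id volume)
  have := hmp.integral_comp e.measurableEmbedding g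
  rw [Measure.volume_eq_prod]
  rw [hcoe] at this
  exact this

/-- The photonic qutrit state `|ψ_h⟩ = |00⟩/√2 + (|02⟩ + |20⟩)/2` has
vanishing sign-binned quadrature correlations: with `φ0, φ2` the Hermite
functions of orders 0 and 2 and
`ψ_h(x,y) = (1/√2)·φ0(x)φ0(y) + (1/2)·(φ0(x)φ2(y) + φ2(x)φ0(y))`, one has
`∫∫ sgn(x·y)·ψ_h(x,y)² dx dy = 0`. -/
theorem qutrit_state_zero_bit_correlation
    (phi0 phi2 : ℝ → ℝ)
    (hphi0 : ∀ x : ℝ, phi0 x = π ^ (-(1 : ℝ) / 4) * Real.exp (-x ^ 2 / 2))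
    (hphi2 : ∀ x : ℝ, phi2 x =
      (2 : ℝ) ^ (-(1 : ℝ) / 2) * π ^ (-(1 : ℝ) / 4) * (2 * x ^ 2 - 1) *
        Real.exp (-x ^ 2 / 2))
    (psi : ℝ → ℝ → ℝ)
    (hpsi : ∀ x y : ℝ, psi x y =
      (1 / Real.sqrt 2) * phi0 x * phi0 y +
        (1 / 2) * (phi0 x * phi2 y + phi2 x * phi0 y)) :
    ∫ q : ℝ × ℝ, Real.sign (q.1 * q.2) * (psi q.1 q.2) ^ 2 = 0 := by
  have key := neg_fst_integral (fun q : ℝ × ℝ =>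
    Real.sign (q.1 * q.2) * (psi q.1 q.2) ^ 2)
  simp only at key
  have hpt : ∀ q : ℝ × ℝ, Real.sign (-q.1 * q.2) * (psi (-q.1) q.2) ^ 2 =
      -(Real.sign (q.1 * q.2) * (psi q.1 q.2) ^ 2) := by
    rintro ⟨x, y⟩
    have h1 : psi (-x) y = psi x y := by
      simp [hpsi, hphi0, hphi2, neg_sq]
    simp only [h1, neg_mul, Real.sign_neg]
  simp_rw [hpt, integral_neg] at key
  linarith
end

section
/- Let φ0(x) = π^{-1/4}·exp(−x²/2) and φ2(x) = 2^{-1/2}·π^{-1/4}·(2x² − 1)·exp(−x²/2) be the normalized Hermite functions of orders 0 and 2, and define ψ_h(x,y) = (1/√2)·φ0(x)·φ0(y) + (1/2)·(φ0(x)·φ2(y) + φ2(x)·φ0(y)). Then ψ_h is not a product wavefunction: there do not exist functions f, g : ℝ → ℝ such that ψ_h(x,y) = f(x)·g(y) for all x, y ∈ ℝ. (The photonic qutrit state |ψ_h⟩ = |00⟩/√2 + (|02⟩ + |20⟩)/2 is entangled even though its bit quadrature correlations vanish.) -/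
/-!
Expanding the Hermite functions, `ψ_h(x,y) = c · (x² + y²) · exp(-(x² + y²)/2)` with `c > 0`.
So `ψ_h` vanishes at the origin but at no other point of the two axes, whereas a product
`f(x)·g(y)` vanishing at the origin has `f 0 = 0` or `g 0 = 0`, hence vanishes on a whole axis.
-/

open Real

theorem not_exists_forall_eq_mul_of_apply_eq_zero {α β M₀ : Type*} [MulZeroClass M₀]
    [NoZeroDivisors M₀] {F : α → β → M₀} {a a' : α} {b b' : β}
    (hab : F a b = 0) (hab' : F a b' ≠ 0) (ha'b : F a' b ≠ 0) :
    ¬ ∃ (f : α → M₀) (g : β → M₀), ∀ x y, F x y = f x * g y := by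
  rintro ⟨f, g, hfg⟩
  rw [hfg] at hab hab' ha'b
  rcases mul_eq_zero.mp hab with hfa | hgb
  · exact hab' (by rw [hfa, zero_mul])
  · exact ha'b (by rw [hgb, mul_zero])

theorem Real.rpow_neg_one_div_two {x : ℝ} (hx : 0 ≤ x) : x ^ (-(1 : ℝ) / 2) = (√x)⁻¹ := by
  rw [neg_div, Real.rpow_neg hx, ← Real.sqrt_eq_rpow]

/-- The photonic qutrit state `|ψ_h⟩ = |00⟩/√2 + (|02⟩ + |20⟩)/2` is
entangled: its wavefunction
`ψ_h(x,y) = (1/√2)·φ0(x)φ0(y) + (1/2)·(φ0(x)φ2(y) + φ2(x)φ0(y))` is not a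
product `f(x)·g(y)` of single-variable functions. -/
theorem qutrit_state_not_product
    (phi0 phi2 : ℝ → ℝ)
    (hphi0 : ∀ x : ℝ, phi0 x = π ^ (-(1 : ℝ) / 4) * Real.exp (-x ^ 2 / 2))
    (hphi2 : ∀ x : ℝ, phi2 x =
      (2 : ℝ) ^ (-(1 : ℝ) / 2) * π ^ (-(1 : ℝ) / 4) * (2 * x ^ 2 - 1) *
        Real.exp (-x ^ 2 / 2))
    (psi : ℝ → ℝ → ℝ)
    (hpsi : ∀ x y : ℝ, psi x y =
      (1 / Real.sqrt 2) * phi0 x * phi0 y +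
        (1 / 2) * (phi0 x * phi2 y + phi2 x * phi0 y)) :
    ¬ ∃ f g : ℝ → ℝ, ∀ x y : ℝ, psi x y = f x * g y := by
  have hpsi_eq : ∀ x y, psi x y = (π ^ (-(1 : ℝ) / 4)) ^ 2 / √2 * (x ^ 2 + y ^ 2) *
      exp (-x ^ 2 / 2) * exp (-y ^ 2 / 2) := by
    intro x y
    rw [hpsi, hphi0, hphi0, hphi2, hphi2, Real.rpow_neg_one_div_two zero_le_two]
    field_simp
    ring
  refine not_exists_forall_eq_mul_of_apply_eq_zero (a := 0) (b := 0) (a' := 1) (b' := 1)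
    ?_ ?_ ?_ <;> rw [hpsi_eq] <;> norm_num <;> positivity
end
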